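/- arXiv:2404.11487 — 3 statements merged into one kernel-verified Lean document; each statement's English description precedes it below -/
import Mathlib

section
/- Let A ∈ ℝ^{n×n} be symmetric and positive semi-definite with rows A_1, …, A_n. Then for every index i with 1 ≤ i ≤ n, one has A_{ii} · (A³)_{ii} ≥ ‖A_i‖_{ℓ²}⁴. -/
/-!
Cauchy–Schwarz for the positive semi-definite form `⟪u, v⟫ = u ⬝ᵥ A *ᵥ v`, applied to the basis
vector `e = eᵢ` and to `A *ᵥ e`: then `⟪e, e⟫ = Aᵢᵢ`, `⟪A e, A e⟫ = (A³)ᵢᵢ`, and by symmetry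
`⟪e, A e⟫ = (A²)ᵢᵢ = ‖Aᵢ‖²`.
-/

open Matrix

variable {n : Type*}

theorem Matrix.PosSemidef.isSymm {A : Matrix n n ℝ} (hA : A.PosSemidef) : A.IsSymm :=
  show Aᵀ = A by simpa [IsHermitian] using hA.isHermitian

variable [Fintype n]

theorem Matrix.PosSemidef.dotProduct_mulVec_sq_le {A : Matrix n n ℝ} (hA : A.PosSemidef)
    (x y : n → ℝ) : (x ⬝ᵥ A *ᵥ y) ^ 2 ≤ (x ⬝ᵥ A *ᵥ x) * (y ⬝ᵥ A *ᵥ y) := by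
  let := A.toSeminormedAddCommGroup hA
  let := A.toInnerProductSpace hA
  have inner_eq (u v : n → ℝ) : inner ℝ u v = u ⬝ᵥ A *ᵥ v := by
    -- the inner product of `Matrix.toInnerProductSpace` unfolds to this
    change (A *ᵥ v) ⬝ᵥ star u = _
    simp [dotProduct_comm]
  simpa only [inner_eq, sq] using real_inner_mul_inner_self_le x y

section CommSemiring

variable {α : Type*} [CommSemiring α]

theorem Matrix.single_one_dotProduct_mulVec_single_one [DecidableEq n] (M : Matrix n n α)
    (i : n) : Pi.single i 1 ⬝ᵥ M *ᵥ Pi.single i 1 = M i i := by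
  simp

theorem Matrix.IsSymm.mulVec_dotProduct {A : Matrix n n α} (hA : A.IsSymm) (u v : n → α) :
    A *ᵥ u ⬝ᵥ v = u ⬝ᵥ A *ᵥ v := by
  rw [dotProduct_comm, dotProduct_mulVec, ← vecMul_transpose, hA.eq, dotProduct_comm]

theorem Matrix.IsSymm.mul_self_apply_self {A : Matrix n n α} (hA : A.IsSymm) (i : n) :
    (A * A) i i = ∑ k, A i k ^ 2 := by
  simp only [mul_apply, sq, hA.apply i]

end CommSemiring

/-- **Lemma 2.** For a symmetric positive semi-definite matrix `A` and any index `i`,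
`A i i * (A³) i i ≥ ‖A_i‖_{ℓ²}⁴`. -/
theorem diag_mul_cube_diag_ge_row_norm_pow_four (n : ℕ)
    (A : Matrix (Fin n) (Fin n) ℝ) (hA : A.PosSemidef) (i : Fin n) :
    (∑ k, (A i k) ^ 2) ^ 2 ≤ A i i * ((A ^ 3) i i) := by
  set e : Fin n → ℝ := Pi.single i 1
  have square_diag : e ⬝ᵥ A *ᵥ (A *ᵥ e) = ∑ k, A i k ^ 2 := by
    rw [mulVec_mulVec, single_one_dotProduct_mulVec_single_one, hA.isSymm.mul_self_apply_self]
  have cube_diag : A *ᵥ e ⬝ᵥ A *ᵥ (A *ᵥ e) = (A ^ 3) i i := by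
    rw [hA.isSymm.mulVec_dotProduct, mulVec_mulVec, mulVec_mulVec, pow_three, ← Matrix.mul_assoc,
      single_one_dotProduct_mulVec_single_one]
  calc (∑ k, A i k ^ 2) ^ 2 = (e ⬝ᵥ A *ᵥ (A *ᵥ e)) ^ 2 := by rw [square_diag]
    _ ≤ (e ⬝ᵥ A *ᵥ e) * (A *ᵥ e ⬝ᵥ A *ᵥ (A *ᵥ e)) := hA.dotProduct_mulVec_sq_le e (A *ᵥ e)
    _ = A i i * (A ^ 3) i i := by rw [cube_diag, single_one_dotProduct_mulVec_single_one]
end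

section
/- Let A ∈ ℝ^{n×n} be symmetric and positive semi-definite with rows A_1, …, A_n, and let i be an index with A_{ii} ≠ 0. If B = A - (A_iᵀ A_i)/A_{ii}, then ‖B‖_F² ≤ ‖A‖_F² - A_{ii}². -/
/-!
With `a = A i i`, `r = A i`, `t = r ⬝ᵥ r` and `s = r ⬝ᵥ A *ᵥ r`, expanding the square gives
`‖B‖_F² = ‖A‖_F² - 2 s / a + t² / a²`, so it suffices that `a⁴ + t² ≤ 2 a s`. Since
`A *ᵥ eᵢ = r`, Cauchy–Schwarz for the form `x ⬝ᵥ A *ᵥ y` applied to `eᵢ` and `r` gives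
`t² ≤ a s`, and `a² ≤ t` because `a` is one of the entries of `r`; hence `a⁴ ≤ t² ≤ a s`.
-/

open Matrix

namespace Matrix

variable {n R : Type*} [Fintype n]

theorem sum_sq_sub_smul_vecMulVec_self [CommRing R] (A : Matrix n n R) (c : R) (v : n → R) :
    ∑ j, ∑ k, (A - c • vecMulVec v v) j k ^ 2
      = ∑ j, ∑ k, A j k ^ 2 - 2 * c * (v ⬝ᵥ A *ᵥ v) + c ^ 2 * (v ⬝ᵥ v) ^ 2 := by
  have hquad : v ⬝ᵥ A *ᵥ v = ∑ j, ∑ k, v j * A j k * v k := by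
    simp only [dotProduct, mulVec, Finset.mul_sum, mul_assoc]
  have hnorm : (v ⬝ᵥ v) ^ 2 = ∑ j, ∑ k, v j ^ 2 * v k ^ 2 := by
    simp only [dotProduct, sq, Finset.sum_mul_sum]
  have hentry (j k : n) : (A - c • vecMulVec v v) j k ^ 2
      = A j k ^ 2 - 2 * c * (v j * A j k * v k) + c ^ 2 * (v j ^ 2 * v k ^ 2) := by
    simp only [sub_apply, smul_apply, vecMulVec_apply, smul_eq_mul]
    ring
  simp only [hentry, hquad, hnorm, Finset.sum_add_distrib, Finset.sum_sub_distrib, Finset.mul_sum]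

section PosSemidef

variable [CommRing R] [LinearOrder R] [IsStrictOrderedRing R] [StarRing R] [TrivialStar R]
  {A : Matrix n n R}

theorem PosSemidef.dotProduct_mulVec_sq_le_s5 (hA : A.PosSemidef) (x y : n → R) :
    (x ⬝ᵥ A *ᵥ y) ^ 2 ≤ (x ⬝ᵥ A *ᵥ x) * (y ⬝ᵥ A *ᵥ y) := by
  classical
  have hsymm : LinearMap.IsSymm A.toBilin' := LinearMap.BilinForm.isSymm_iff.mp <|
    isSymm_toBilin'_iff_isSymm.mpr (isHermitian_iff_isSymm.mp hA.1)
  have hnonneg (z : n → R) : 0 ≤ A.toBilin' z z := by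
    simpa [toBilin'_apply'] using hA.dotProduct_mulVec_nonneg z
  simpa only [toBilin'_apply'] using A.toBilin'.apply_sq_le_of_symm hnonneg hsymm x y

theorem PosSemidef.sq_dotProduct_row_self_le (hA : A.PosSemidef) (i : n) :
    (A i ⬝ᵥ A i) ^ 2 ≤ A i i * (A i ⬝ᵥ A *ᵥ A i) := by
  classical
  have hrow : Pi.single i 1 ⬝ᵥ A *ᵥ A i = A i ⬝ᵥ A i := by
    rw [dotProduct_mulVec, single_one_vecMul, row_def]
  simpa [hrow] using hA.dotProduct_mulVec_sq_le_s5 (Pi.single i 1) (A i)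

end PosSemidef

end Matrix

/-- **Corollary 1, second inequality.** Removing the `i`-th row/column of a symmetric
positive semi-definite matrix `A` decreases the squared Frobenius norm by at least
`A i i ^ 2`. -/
theorem frobenius_decrease_diag_sq (n : ℕ)
    (A : Matrix (Fin n) (Fin n) ℝ) (hA : A.PosSemidef) (i : Fin n) (hi : A i i ≠ 0)
    (B : Matrix (Fin n) (Fin n) ℝ)
    (hB : B = A - (A i i)⁻¹ • Matrix.vecMulVec (A i) (A i)) :
    ∑ j, ∑ k, (B j k) ^ 2 ≤ (∑ j, ∑ k, (A j k) ^ 2) - (A i i) ^ 2 := by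
  have hpos : 0 < A i i := lt_of_le_of_ne hA.diag_nonneg (Ne.symm hi)
  have hdiag : A i i ^ 2 ≤ A i ⬝ᵥ A i := by
    simpa [dotProduct, ← sq] using
      Finset.single_le_sum (fun j _ ↦ sq_nonneg (A i j)) (Finset.mem_univ i)
  have hcs := hA.sq_dotProduct_row_self_le i
  rw [hB, sum_sq_sub_smul_vecMulVec_self]
  set a := A i i
  set t := A i ⬝ᵥ A i
  set s := A i ⬝ᵥ A *ᵥ A i
  have hquartic : (a ^ 2) ^ 2 ≤ t ^ 2 := pow_le_pow_left₀ (sq_nonneg a) hdiag 2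
  have hgap : 2 * a⁻¹ * s - a⁻¹ ^ 2 * t ^ 2 - a ^ 2 = (2 * a * s - (a ^ 4 + t ^ 2)) / a ^ 2 := by
    field_simp
    ring
  have : 0 ≤ (2 * a * s - (a ^ 4 + t ^ 2)) / a ^ 2 :=
    div_nonneg (by linarith) (sq_nonneg a)
  linarith
end

section
/- Let A ∈ ℝ^{n×n} be symmetric and positive semi-definite with rows A_1, …, A_n, and let i be an index with A_{ii} > 0. Then the matrix B = A - (A_iᵀ A_i)/A_{ii} is symmetric and positive semi-definite. -/
/-!
With the elimination matrix `P = 1 - e_i A_i / A_ii`, the residual `B = A - A_iᴴ A_i / A_ii` is the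
congruence transform `Pᴴ A P`: indeed `A P = B`, and `Pᴴ B = B` because row `i` of `B` vanishes.
Congruence preserves positive semidefiniteness.
-/

open scoped Matrix

namespace Matrix

variable {ι 𝕜 : Type*} [Field 𝕜] [StarRing 𝕜]

/-- For `A i i = 0` the junk value `0⁻¹ = 0` makes this `A` itself. -/
def pivotResidual (A : Matrix ι ι 𝕜) (i : ι) : Matrix ι ι 𝕜 :=
  A - (A i i)⁻¹ • vecMulVec (star (A i)) (A i)

theorem IsHermitian.pivotResidual_row_self {A : Matrix ι ι 𝕜} (hA : A.IsHermitian) {i : ι}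
    (hi : A i i ≠ 0) : A.pivotResidual i i = 0 := by
  ext j
  have hdiag : star (A i i) = A i i := hA.apply i i
  simp only [pivotResidual, sub_apply, smul_apply, vecMulVec_apply, Pi.star_apply, hdiag,
    smul_eq_mul, inv_mul_cancel_left₀ hi, sub_self, Pi.zero_apply]

variable [Fintype ι] [DecidableEq ι]

def pivotElimination (A : Matrix ι ι 𝕜) (i : ι) : Matrix ι ι 𝕜 :=
  1 - (A i i)⁻¹ • vecMulVec (Pi.single i 1) (A i)

theorem IsHermitian.mul_pivotElimination {A : Matrix ι ι 𝕜} (hA : A.IsHermitian) (i : ι) :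
    A * A.pivotElimination i = A.pivotResidual i := by
  have hcol : A *ᵥ Pi.single i 1 = star (A i) := by
    ext j
    simp [hA.apply]
  rw [pivotElimination, pivotResidual, mul_sub, mul_one, mul_smul_comm, mul_vecMulVec, hcol]

theorem IsHermitian.conjTranspose_pivotElimination_mul_mul {A : Matrix ι ι 𝕜}
    (hA : A.IsHermitian) (i : ι) :
    (A.pivotElimination i)ᴴ * A * A.pivotElimination i = A.pivotResidual i := by
  by_cases hi : A i i = 0
  · simp [pivotElimination, pivotResidual, hi]
  rw [mul_assoc, hA.mul_pivotElimination]
  simp [pivotElimination, sub_mul, vecMulVec_mul, row, hA.pivotResidual_row_self hi]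

theorem PosSemidef.pivotResidual [PartialOrder 𝕜] {A : Matrix ι ι 𝕜} (hA : A.PosSemidef)
    (i : ι) : (A.pivotResidual i).PosSemidef :=
  hA.1.conjTranspose_pivotElimination_mul_mul i ▸ hA.conjTranspose_mul_mul_same _

end Matrix

theorem pivot_step_posSemidef_general (n : ℕ)
    (A : Matrix (Fin n) (Fin n) ℝ) (hA : A.PosSemidef) (i : Fin n)
    (B : Matrix (Fin n) (Fin n) ℝ)
    (hB : B = A - (A i i)⁻¹ • Matrix.vecMulVec (A i) (A i)) :
    B.PosSemidef := by
  simpa [hB, Matrix.pivotResidual] using hA.pivotResidual i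

/-- One step of partial Cholesky pivoting preserves (symmetry and) positive
semi-definiteness of the residual. -/
theorem pivot_step_posSemidef (n : ℕ)
    (A : Matrix (Fin n) (Fin n) ℝ) (hA : A.PosSemidef) (i : Fin n) (hi : 0 < A i i)
    (B : Matrix (Fin n) (Fin n) ℝ)
    (hB : B = A - (A i i)⁻¹ • Matrix.vecMulVec (A i) (A i)) :
    B.PosSemidef :=
  pivot_step_posSemidef_general n A hA i B hB
end
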